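/- arXiv:0708.2776 — 8 statements merged into one kernel-verified Lean document; each statement's English description precedes it below -/
import Mathlib

section
/- For every positive even integer n, the set {1, 2, ..., 3n} can be partitioned into n triples such that each triple sums to either 6n+3 or 3n, and each triple contains exactly one integer from each residue class modulo 3. -/
/-!
Write `n = 2m`. The `t`-th triple, for `t < 2m`, takes `3t + 1` and `3t + 3` together with
`3σ(t) + 2`, so it meets each residue class once, and the triples partition `{1, …, 6m}` as soon
as `σ` permutes `{0, …, 2m - 1}`. Its sum is `3(2t + 2 + σ(t))`. Taking for `σ = partner m` the
permutation sending `t < m` to the even indices and `t ≥ m` to the odd ones, both in decreasing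
order, makes `2t + 2 + σ(t)` equal to `2m` resp. `4m + 1`, i.e. the sum `3n` resp. `6n + 3`.
-/

open Finset

def residueTriple (σ : ℕ → ℕ) (t : ℕ) : Finset ℕ := {3 * t + 1, 3 * t + 3, 3 * σ t + 2}

section residueTriple

variable {σ : ℕ → ℕ} {t x : ℕ}

lemma mem_residueTriple :
    x ∈ residueTriple σ t ↔ x = 3 * t + 1 ∨ x = 3 * t + 3 ∨ x = 3 * σ t + 2 := by
  simp [residueTriple]

lemma card_residueTriple : (residueTriple σ t).card = 3 := by
  rw [residueTriple, card_eq_three]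
  exact ⟨_, _, _, by omega, by omega, by omega, rfl⟩

lemma sum_residueTriple : ∑ x ∈ residueTriple σ t, x = 3 * (2 * t + 2 + σ t) := by
  rw [residueTriple, sum_insert (by simp; omega), sum_pair (by omega)]
  ring

lemma existsUnique_mem_residueTriple_mod {r : ℕ} (hr : r < 3) :
    ∃! x, x ∈ residueTriple σ t ∧ x % 3 = r := by
  simp only [mem_residueTriple]
  interval_cases r
  · exact ⟨3 * t + 3, by omega, by omega⟩
  · exact ⟨3 * t + 1, by omega, by omega⟩
  · exact ⟨3 * σ t + 2, by omega, by omega⟩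

lemma residueTriple_injective : Function.Injective (residueTriple σ) := by
  intro i j h
  have : 3 * i + 1 ∈ residueTriple σ j := h ▸ mem_residueTriple.2 (Or.inl rfl)
  rw [mem_residueTriple] at this
  omega

lemma disjoint_residueTriple {i j : ℕ} (hij : i ≠ j) (hσ : σ i ≠ σ j) :
    Disjoint (residueTriple σ i) (residueTriple σ j) := by
  rw [disjoint_left]
  intro x hi hj
  rw [mem_residueTriple] at hi hj
  omega

lemma biUnion_residueTriple {N : ℕ} (hσ : Set.BijOn σ (range N) (range N)) :
    (range N).biUnion (residueTriple σ) = Icc 1 (3 * N) := by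
  ext x
  simp only [mem_biUnion, mem_range, mem_Icc, mem_residueTriple]
  constructor
  · rintro ⟨t, ht, hx⟩
    have := hσ.mapsTo (mem_coe.2 (mem_range.2 ht))
    simp only [coe_range, Set.mem_Iio] at this
    omega
  · rintro ⟨h1, h2⟩
    obtain h | h | h : x % 3 = 0 ∨ x % 3 = 1 ∨ x % 3 = 2 := by omega
    · exact ⟨x / 3 - 1, by omega, by omega⟩
    · exact ⟨x / 3, by omega, by omega⟩
    · obtain ⟨t, ht, hσt⟩ := hσ.surjOn (show x / 3 ∈ (range N : Set ℕ) by simp; omega)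
      simp only [coe_range, Set.mem_Iio] at ht
      exact ⟨t, ht, by omega⟩

end residueTriple

def partner (m t : ℕ) : ℕ := if t < m then 2 * (m - 1 - t) else 4 * m - 1 - 2 * t

lemma bijOn_partner (m : ℕ) : Set.BijOn (partner m) (range (2 * m)) (range (2 * m)) := by
  simp only [coe_range]
  refine ⟨fun t ht => ?_, fun i hi j hj h => ?_, fun k hk => ?_⟩
  · simp only [Set.mem_Iio, partner] at ht ⊢
    split_ifs <;> omega
  · simp only [Set.mem_Iio, partner] at hi hj h
    split_ifs at h <;> omega
  · simp only [Set.mem_Iio, Set.mem_image, partner] at hk ⊢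
    obtain ⟨j, rfl | rfl⟩ := Nat.even_or_odd' k
    · exact ⟨m - 1 - j, by omega, by rw [if_pos (by omega)]; omega⟩
    · exact ⟨2 * m - 1 - j, by omega, by rw [if_neg (by omega)]; omega⟩

lemma sum_residueTriple_partner {m t : ℕ} (ht : t < 2 * m) :
    ∑ x ∈ residueTriple (partner m) t, x = 6 * (2 * m) + 3 ∨
      ∑ x ∈ residueTriple (partner m) t, x = 3 * (2 * m) := by
  rw [sum_residueTriple, partner]
  split_ifs <;> omega

theorem stmt_0_general (n : ℕ) (he : Even n) :
    ∃ T : Finset (Finset ℕ), T.card = n ∧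
      (T : Set (Finset ℕ)).PairwiseDisjoint id ∧
      T.sup id = Finset.Icc 1 (3 * n) ∧
      ∀ t ∈ T, t.card = 3 ∧ ((∑ x ∈ t, x) = 6 * n + 3 ∨ (∑ x ∈ t, x) = 3 * n) ∧
        ∀ r < 3, ∃! x, x ∈ t ∧ x % 3 = r := by
  obtain ⟨m, rfl⟩ := he
  rw [← two_mul]
  have hbij := bijOn_partner m
  refine ⟨(range (2 * m)).image (residueTriple (partner m)), ?_, ?_, ?_, ?_⟩
  · exact card_image_of_injective _ residueTriple_injective |>.trans (card_range _)
  · rw [coe_image, residueTriple_injective.injOn.pairwiseDisjoint_image]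
    exact fun i hi j hj hij => disjoint_residueTriple hij (hbij.injOn.ne hi hj hij)
  · rw [sup_image, Function.id_comp, sup_eq_biUnion, biUnion_residueTriple hbij]
  · simp only [mem_image, mem_range]
    rintro _ ⟨t, ht, rfl⟩
    exact ⟨card_residueTriple, sum_residueTriple_partner ht,
      fun r => existsUnique_mem_residueTriple_mod⟩

theorem stmt_0 (n : ℕ) (hn : 0 < n) (he : Even n) :
    ∃ T : Finset (Finset ℕ), T.card = n ∧
      (T : Set (Finset ℕ)).PairwiseDisjoint id ∧
      T.sup id = Finset.Icc 1 (3 * n) ∧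
      ∀ t ∈ T, t.card = 3 ∧ ((∑ x ∈ t, x) = 6 * n + 3 ∨ (∑ x ∈ t, x) = 3 * n) ∧
        ∀ r < 3, ∃! x, x ∈ t ∧ x % 3 = r :=
  stmt_0_general n he
end

section
/- For every positive odd integer n, the set {1, 2, ..., 3n} can be partitioned into n triples such that each triple sums to either 6n or 3n, and each triple contains exactly one integer from each residue class modulo 3. -/
/-!
Split `{1, …, 3n}` by residues: the `i`-th triple (`0 ≤ i < n`) takes `3i+1` and `3i+2`
together with a multiple of three `3τ(i)+3`, so its sum is `3(2i + τ(i) + 2)` and it meets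
every residue class once. It remains to choose a permutation `τ` of `{0, …, n-1}` with
`2i + τ(i) + 2 ∈ {n, 2n}`, i.e. `τ(i) ≡ -2(i+1) (mod n)`; this is a permutation because
`2` is invertible modulo the odd number `n`.
-/

open Finset

namespace ResidueTriples

def triple (τ : ℕ → ℕ) (i : ℕ) : Finset ℕ := {3 * i + 1, 3 * i + 2, 3 * τ i + 3}

variable (τ : ℕ → ℕ)

theorem mem_triple {i x : ℕ} :
    x ∈ triple τ i ↔ x = 3 * i + 1 ∨ x = 3 * i + 2 ∨ x = 3 * τ i + 3 := by
  simp [triple]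

theorem card_triple (i : ℕ) : (triple τ i).card = 3 := by
  rw [triple, card_insert_of_notMem (by simp; omega), card_insert_of_notMem (by simp; omega),
    card_singleton]

theorem sum_triple (i : ℕ) : ∑ x ∈ triple τ i, x = 3 * (2 * i + τ i + 2) := by
  rw [triple, sum_insert (by simp; omega), sum_insert (by simp; omega), sum_singleton]
  ring

theorem existsUnique_mem_triple_mod_three (i : ℕ) {r : ℕ} (hr : r < 3) :
    ∃! x, x ∈ triple τ i ∧ x % 3 = r := by
  have hx : ∃ x ∈ triple τ i, x % 3 = r := by
    interval_cases r
    · exact ⟨3 * τ i + 3, by simp [mem_triple], by omega⟩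
    · exact ⟨3 * i + 1, by simp [mem_triple], by omega⟩
    · exact ⟨3 * i + 2, by simp [mem_triple], by omega⟩
  obtain ⟨x, hxt, hxr⟩ := hx
  refine ⟨x, ⟨hxt, hxr⟩, fun y ⟨hyt, hyr⟩ => ?_⟩
  rw [mem_triple] at hxt hyt
  omega

theorem triple_injective : Function.Injective (triple τ) := by
  intro i j hij
  have h : 3 * i + 1 ∈ triple τ j := hij ▸ (mem_triple τ).2 (Or.inl rfl)
  rw [mem_triple] at h
  omega

variable {τ} {n : ℕ}

theorem pairwiseDisjoint_triple (hτ : Set.InjOn τ (Set.Iio n)) :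
    ((range n).image (triple τ) : Set (Finset ℕ)).PairwiseDisjoint id := by
  simp only [coe_image, coe_range]
  rintro _ ⟨i, hi, rfl⟩ _ ⟨j, hj, rfl⟩ hne
  have hij : i ≠ j := fun h => hne (h ▸ rfl)
  have hτij : τ i ≠ τ j := fun h => hij (hτ hi hj h)
  refine disjoint_left.2 fun x hxi hxj => ?_
  rw [id, mem_triple] at hxi hxj
  omega

theorem sup_triple (hτ : Set.BijOn τ (Set.Iio n) (Set.Iio n)) :
    (range n).sup (triple τ) = Icc 1 (3 * n) := by
  ext x
  simp only [mem_sup, mem_range, mem_Icc]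
  constructor
  · rintro ⟨i, hi, hx⟩
    have : τ i < n := hτ.mapsTo (Set.mem_Iio.2 hi)
    rw [mem_triple] at hx
    omega
  · rintro ⟨hx1, hx3n⟩
    obtain h | h | h : x % 3 = 0 ∨ x % 3 = 1 ∨ x % 3 = 2 := by omega
    · obtain ⟨i, hi, hτi⟩ := hτ.surjOn (Set.mem_Iio.2 (show x / 3 - 1 < n by omega))
      exact ⟨i, hi, (mem_triple τ).2 (by omega)⟩
    · exact ⟨x / 3, by omega, (mem_triple τ).2 (by omega)⟩
    · exact ⟨x / 3, by omega, (mem_triple τ).2 (by omega)⟩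

end ResidueTriples

/-- The representative of `-2(i+1)` modulo `n` in `[0, n)`, for `i < n`. -/
def partnerIndex (n i : ℕ) : ℕ := if 2 * i + 2 ≤ n then n - 2 - 2 * i else 2 * n - 2 - 2 * i

theorem partnerIndex_spec {n i : ℕ} (hi : i < n) :
    2 * i + partnerIndex n i + 2 = n ∨ 2 * i + partnerIndex n i + 2 = 2 * n := by
  unfold partnerIndex
  split <;> omega

theorem partnerIndex_lt {n i : ℕ} (hi : i < n) : partnerIndex n i < n := by
  unfold partnerIndex
  split <;> omega

theorem bijOn_partnerIndex {n : ℕ} (ho : Odd n) :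
    Set.BijOn (partnerIndex n) (Set.Iio n) (Set.Iio n) := by
  obtain ⟨k, hk⟩ := ho
  refine ((Set.finite_Iio n).injOn_iff_bijOn_of_mapsTo fun i => partnerIndex_lt).1
    fun i hi j hj hij => ?_
  simp only [Set.mem_Iio, partnerIndex] at hi hj hij
  split at hij <;> split at hij <;> omega

open ResidueTriples in
theorem stmt_1_general (n : ℕ) (ho : Odd n) :
    ∃ T : Finset (Finset ℕ), T.card = n ∧
      (T : Set (Finset ℕ)).PairwiseDisjoint id ∧
      T.sup id = Finset.Icc 1 (3 * n) ∧
      ∀ t ∈ T, t.card = 3 ∧ ((∑ x ∈ t, x) = 6 * n ∨ (∑ x ∈ t, x) = 3 * n) ∧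
        ∀ r < 3, ∃! x, x ∈ t ∧ x % 3 = r := by
  have hτ := bijOn_partnerIndex ho
  refine ⟨(range n).image (triple (partnerIndex n)), ?_,
    pairwiseDisjoint_triple hτ.injOn, ?_, ?_⟩
  · rw [card_image_of_injective _ (triple_injective _), card_range]
  · rw [sup_image, Function.id_comp, sup_triple hτ]
  · simp only [mem_image, mem_range]
    rintro _ ⟨i, hi, rfl⟩
    refine ⟨card_triple _ i, ?_, fun r hr => existsUnique_mem_triple_mod_three _ i hr⟩
    rw [sum_triple]
    rcases partnerIndex_spec (n := n) hi with h | h <;> omega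

theorem stmt_1 (n : ℕ) (hn : 0 < n) (ho : Odd n) :
    ∃ T : Finset (Finset ℕ), T.card = n ∧
      (T : Set (Finset ℕ)).PairwiseDisjoint id ∧
      T.sup id = Finset.Icc 1 (3 * n) ∧
      ∀ t ∈ T, t.card = 3 ∧ ((∑ x ∈ t, x) = 6 * n ∨ (∑ x ∈ t, x) = 3 * n) ∧
        ∀ r < 3, ∃! x, x ∈ t ∧ x % 3 = r :=
  stmt_1_general n ho
end

section
/- For every positive even integer n, the set H = {k : 1 ≤ k < 4n, k not ≡ 0 (mod 4)} can be partitioned into n triples such that each triple sums to either 4n−2 or 8n+2, and each triple contains exactly one integer from each nonzero residue class modulo 4. -/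
theorem stmt_2 (n : ℕ) (hn : 0 < n) (he : Even n) :
    ∃ T : Finset (Finset ℕ), T.card = n ∧
      (T : Set (Finset ℕ)).PairwiseDisjoint id ∧
      T.sup id = (Finset.Ico 1 (4 * n)).filter (fun k => k % 4 ≠ 0) ∧
      ∀ t ∈ T, t.card = 3 ∧ ((∑ x ∈ t, x) = 4 * n - 2 ∨ (∑ x ∈ t, x) = 8 * n + 2) ∧
        ∀ r, 1 ≤ r → r < 4 → ∃! x, x ∈ t ∧ x % 4 = r := by
  classical
  obtain ⟨m, hm⟩ := he
  set B : ℕ → ℕ := fun t => if t < m then 8 * (m - 1 - t) + 2 else 16 * m - 8 * t - 2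
    with hBdef
  set f : ℕ → Finset ℕ := fun t => {4 * t + 1, B t, 4 * t + 3} with hfdef
  have hmem : ∀ t x, x ∈ f t ↔ x = 4 * t + 1 ∨ x = B t ∨ x = 4 * t + 3 := by
    intro t x
    simp [hfdef]
  have hB1 : ∀ t, t < m → B t = 8 * (m - 1 - t) + 2 := by
    intro t h; simp [hBdef, h]
  have hB2 : ∀ t, ¬ t < m → B t = 16 * m - 8 * t - 2 := by
    intro t h; simp [hBdef, h]
  have hinj : ∀ t ∈ Finset.range n, ∀ t' ∈ Finset.range n, f t = f t' → t = t' := by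
    intro t ht t' ht' h
    simp only [Finset.mem_range] at ht ht'
    have hx : (4 * t + 1) ∈ f t' := by rw [← h, hmem]; left; rfl
    rw [hmem] at hx
    by_cases h2 : t' < m
    · rw [hB1 t' h2] at hx; omega
    · rw [hB2 t' h2] at hx; omega
  refine ⟨(Finset.range n).image f, ?_, ?_, ?_, ?_⟩
  · rw [Finset.card_image_of_injOn, Finset.card_range]
    intro a ha b hb hab
    exact hinj a (by simpa using ha) b (by simpa using hb) hab
  · intro s hs s' hs' hne
    simp only [Finset.coe_image, Set.mem_image, Finset.mem_coe, Finset.mem_range] at hs hs'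
    obtain ⟨t, ht, rfl⟩ := hs
    obtain ⟨t', ht', rfl⟩ := hs'
    have htt : t ≠ t' := fun h => hne (by rw [h])
    simp only [Function.onFun, id]
    rw [Finset.disjoint_left]
    intro x hx hx'
    rw [hmem] at hx hx'
    by_cases h1 : t < m <;> by_cases h2 : t' < m <;>
      [rw [hB1 t h1, hB1 t' h2] at *; rw [hB1 t h1, hB2 t' h2] at *;
       rw [hB2 t h1, hB1 t' h2] at *; rw [hB2 t h1, hB2 t' h2] at *] <;> omega
  · ext x
    simp only [Finset.mem_sup, Finset.mem_image, Finset.mem_filter, Finset.mem_Ico,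
      Finset.mem_range, id]
    constructor
    · rintro ⟨s, ⟨t, ht, rfl⟩, hx⟩
      rw [hmem] at hx
      by_cases h1 : t < m
      · rw [hB1 t h1] at hx; omega
      · rw [hB2 t h1] at hx; omega
    · rintro ⟨⟨hx1, hx2⟩, hx4⟩
      have h4 : x % 4 = 1 ∨ x % 4 = 2 ∨ x % 4 = 3 := by omega
      rcases h4 with h4 | h4 | h4
      · refine ⟨f (x / 4), ⟨x / 4, by omega, rfl⟩, ?_⟩
        rw [hmem]; left; omega
      · have h8 : x % 8 = 2 ∨ x % 8 = 6 := by omega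
        rcases h8 with h8 | h8
        · -- x = 8q+2, t = m-1-q, branch t < m
          set t := m - 1 - x / 8 with htdef
          have htm : t < m := by omega
          refine ⟨f t, ⟨t, by omega, rfl⟩, ?_⟩
          rw [hmem]; right; left
          rw [hB1 t htm]; omega
        · -- x = 8q-2, t = 2m - q, branch t ≥ m
          set t := 2 * m - (x + 2) / 8 with htdef
          have htm : ¬ t < m := by omega
          refine ⟨f t, ⟨t, by omega, rfl⟩, ?_⟩
          rw [hmem]; right; left
          rw [hB2 t htm]; omega
      · refine ⟨f (x / 4), ⟨x / 4, by omega, rfl⟩, ?_⟩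
        rw [hmem]; right; right; omega
  · intro s hs
    simp only [Finset.mem_image, Finset.mem_range] at hs
    obtain ⟨t, ht, rfl⟩ := hs
    have hBt : (t < m ∧ B t = 8 * (m - 1 - t) + 2) ∨ (¬ t < m ∧ B t = 16 * m - 8 * t - 2) := by
      by_cases h1 : t < m
      · exact Or.inl ⟨h1, hB1 t h1⟩
      · exact Or.inr ⟨h1, hB2 t h1⟩
    have hne1 : 4 * t + 1 ≠ B t := by rcases hBt with ⟨h, hE⟩ | ⟨h, hE⟩ <;> omega
    have hne2 : 4 * t + 1 ≠ 4 * t + 3 := by omega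
    have hne3 : B t ≠ 4 * t + 3 := by rcases hBt with ⟨h, hE⟩ | ⟨h, hE⟩ <;> omega
    refine ⟨?_, ?_, ?_⟩
    · exact Finset.card_eq_three.mpr ⟨4 * t + 1, B t, 4 * t + 3, hne1, hne2, hne3, rfl⟩
    · have hd1 : (4 * t + 1) ∉ ({B t, 4 * t + 3} : Finset ℕ) := by
        simp only [Finset.mem_insert, Finset.mem_singleton]
        push_neg; exact ⟨hne1, hne2⟩
      have hd2 : B t ∉ ({4 * t + 3} : Finset ℕ) := by
        simp only [Finset.mem_singleton]; exact hne3
      have : ∑ x ∈ f t, x = 4 * t + 1 + (B t + (4 * t + 3)) := by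
        rw [hfdef]
        simp only
        rw [Finset.sum_insert hd1, Finset.sum_insert hd2, Finset.sum_singleton]
      rw [this]
      rcases hBt with ⟨h, hE⟩ | ⟨h, hE⟩ <;> rw [hE] <;> omega
    · have hBmod : B t % 4 = 2 := by rcases hBt with ⟨h, hE⟩ | ⟨h, hE⟩ <;> omega
      intro r hr1 hr4
      interval_cases r
      · refine ⟨4 * t + 1, ⟨by rw [hmem]; left; rfl, by omega⟩, ?_⟩
        rintro y ⟨hy, hy4⟩
        rw [hmem] at hy; omega
      · refine ⟨B t, ⟨by rw [hmem]; right; left; rfl, hBmod⟩, ?_⟩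
        rintro y ⟨hy, hy4⟩
        rw [hmem] at hy; omega
      · refine ⟨4 * t + 3, ⟨by rw [hmem]; right; right; rfl, by omega⟩, ?_⟩
        rintro y ⟨hy, hy4⟩
        rw [hmem] at hy; omega
end

section
/- For every even positive integer m, the set {1, 2, ..., m} can be partitioned into m/2 pairs each summing to m+1, and each pair either consists of two elements congruent to each other modulo 3, or of two elements in the two residue classes modulo 3 distinct from a, where 2a ≡ m+1 (mod 3). -/
/-!
Pair each `i ≤ m / 2` with its mirror image `m + 1 - i`. If one element of a pair is
congruent to `a` modulo 3, so is the other, because the two elements sum to `m + 1 ≡ 2a`.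
Hence a pair whose residues differ avoids the class of `a`.
-/

open Finset

namespace MirrorPairs

def mirrorPair (k i : ℕ) : Finset ℕ := {i, 2 * k + 1 - i}

def mirrorPairs (k : ℕ) : Finset (Finset ℕ) := (Icc 1 k).image (mirrorPair k)

theorem mem_mirrorPair_iff {k i x : ℕ} : x ∈ mirrorPair k i ↔ x = i ∨ x = 2 * k + 1 - i := by
  simp [mirrorPair]

theorem disjoint_mirrorPair {k i j : ℕ} (hi : i ≤ k) (hj : j ≤ k) (hij : i ≠ j) :
    Disjoint (mirrorPair k i) (mirrorPair k j) := by
  rw [disjoint_left]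
  intro x hxi hxj
  rw [mem_mirrorPair_iff] at hxi hxj
  omega

theorem injOn_mirrorPair (k : ℕ) : Set.InjOn (mirrorPair k) (Icc 1 k) := by
  intro i hi j hj hij
  have hi_mem : i ∈ mirrorPair k j := hij ▸ mem_mirrorPair_iff.2 (Or.inl rfl)
  rw [mem_mirrorPair_iff] at hi_mem
  simp only [coe_Icc, Set.mem_Icc] at hi hj
  omega

theorem card_mirrorPairs (k : ℕ) : (mirrorPairs k).card = k := by
  rw [mirrorPairs, card_image_of_injOn (injOn_mirrorPair k), Nat.card_Icc, Nat.add_sub_cancel]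

theorem pairwiseDisjoint_mirrorPairs (k : ℕ) :
    (mirrorPairs k : Set (Finset ℕ)).PairwiseDisjoint id := by
  rw [mirrorPairs, coe_image, (injOn_mirrorPair k).pairwiseDisjoint_image]
  intro i hi j hj hij
  simp only [coe_Icc, Set.mem_Icc] at hi hj
  exact disjoint_mirrorPair hi.2 hj.2 hij

theorem sup_mirrorPairs (k : ℕ) : (mirrorPairs k).sup id = Icc 1 (2 * k) := by
  ext x
  simp only [mirrorPairs, sup_image, Function.id_comp, mem_sup, mem_Icc, mem_mirrorPair_iff]
  constructor
  · rintro ⟨i, hi, hx⟩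
    omega
  · intro hx
    rcases le_or_gt x k with hxk | hxk
    · exact ⟨x, by omega, Or.inl rfl⟩
    · exact ⟨2 * k + 1 - x, by omega, by omega⟩

theorem card_mirrorPair {k i : ℕ} (hi : i ≤ k) : (mirrorPair k i).card = 2 :=
  card_pair (by omega)

theorem sum_mirrorPair {k i : ℕ} (hi : i ≤ k) : ∑ x ∈ mirrorPair k i, x = 2 * k + 1 := by
  rw [mirrorPair, sum_pair (by omega)]
  omega

end MirrorPairs

theorem mod_three_eq_or_ne_of_two_mul_mod_three_eq_add {x y a : ℕ}
    (ha : 2 * a % 3 = (x + y) % 3) :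
    (∀ u ∈ ({x, y} : Finset ℕ), ∀ v ∈ ({x, y} : Finset ℕ), u % 3 = v % 3) ∨
      ((∀ u ∈ ({x, y} : Finset ℕ), u % 3 ≠ a % 3) ∧
        ∃ u ∈ ({x, y} : Finset ℕ), ∃ v ∈ ({x, y} : Finset ℕ), u % 3 ≠ v % 3) := by
  simp only [mem_insert, mem_singleton, forall_eq_or_imp, forall_eq, exists_eq_or_imp,
    exists_eq_left, true_and, and_true]
  omega

open MirrorPairs in
theorem stmt_4_general (m : ℕ) (he : Even m) (a : ℕ) (ha : 2 * a % 3 = (m + 1) % 3) :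
    ∃ P : Finset (Finset ℕ), P.card = m / 2 ∧
      (P : Set (Finset ℕ)).PairwiseDisjoint id ∧
      P.sup id = Finset.Icc 1 m ∧
      ∀ p ∈ P, p.card = 2 ∧ (∑ x ∈ p, x) = m + 1 ∧
        ((∀ x ∈ p, ∀ y ∈ p, x % 3 = y % 3) ∨
          ((∀ x ∈ p, x % 3 ≠ a % 3) ∧ ∃ x ∈ p, ∃ y ∈ p, x % 3 ≠ y % 3)) := by
  obtain ⟨k, rfl⟩ := he
  rw [← two_mul] at ha ⊢
  refine ⟨mirrorPairs k, by rw [card_mirrorPairs]; omega, pairwiseDisjoint_mirrorPairs k,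
    sup_mirrorPairs k, ?_⟩
  simp only [mirrorPairs, mem_image, mem_Icc]
  rintro _ ⟨i, hi, rfl⟩
  refine ⟨card_mirrorPair hi.2, sum_mirrorPair hi.2, ?_⟩
  exact mod_three_eq_or_ne_of_two_mul_mod_three_eq_add
    (by rwa [Nat.add_sub_cancel' (by omega)])

theorem stmt_4 (m : ℕ) (hm : 0 < m) (he : Even m) (a : ℕ) (ha : 2 * a % 3 = (m + 1) % 3) :
    ∃ P : Finset (Finset ℕ), P.card = m / 2 ∧
      (P : Set (Finset ℕ)).PairwiseDisjoint id ∧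
      P.sup id = Finset.Icc 1 m ∧
      ∀ p ∈ P, p.card = 2 ∧ (∑ x ∈ p, x) = m + 1 ∧
        ((∀ x ∈ p, ∀ y ∈ p, x % 3 = y % 3) ∨
          ((∀ x ∈ p, x % 3 ≠ a % 3) ∧ ∃ x ∈ p, ∃ y ∈ p, x % 3 ≠ y % 3)) :=
  stmt_4_general m he a ha
end

section
/- Every cycle graph C_n with n ≥ 3 vertices is antimagic. -/
open Finset

/-- The vertex-sum of `v` under edge labeling `f`: the sum of labels on edges incident to `v`. -/
def vertexSum {V : Type*} [Fintype V] [DecidableEq V] (G : SimpleGraph V)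
    [DecidableRel G.Adj] (f : Sym2 V → ℕ) (v : V) : ℕ :=
  ∑ e ∈ G.incidenceFinset v, f e

/-- A graph is antimagic if some bijective labeling of its edges by `{1, …, |E(G)|}`
has pairwise distinct vertex-sums. -/
def IsAntimagic {V : Type*} [Fintype V] [DecidableEq V] (G : SimpleGraph V)
    [DecidableRel G.Adj] : Prop :=
  ∃ f : Sym2 V → ℕ,
    Set.BijOn f ↑G.edgeFinset ↑(Finset.Icc 1 G.edgeFinset.card) ∧
    ∀ u v : V, u ≠ v → vertexSum G f u ≠ vertexSum G f v
namespace AM5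

def lab (n i : ℕ) : ℕ :=
  if 2 ∣ n ∧ i = n - 2 then n else if 2 ∣ n ∧ i = n - 1 then n - 1 else i + 1

lemma lab_mem {n i : ℕ} (hn : 3 ≤ n) (hi : i < n) : 1 ≤ lab n i ∧ lab n i ≤ n := by
  unfold lab; split_ifs <;> omega

lemma lab_inj {n i j : ℕ} (hn : 3 ≤ n) (hi : i < n) (hj : j < n)
    (h : lab n i = lab n j) : i = j := by
  unfold lab at h; split_ifs at h <;> omega

lemma lab_surj {n k : ℕ} (hn : 3 ≤ n) (h1 : 1 ≤ k) (h2 : k ≤ n) :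
    ∃ i, i < n ∧ lab n i = k := by
  by_cases he : 2 ∣ n
  · by_cases h3 : k = n
    · exact ⟨n - 2, by omega, by unfold lab; split_ifs <;> omega⟩
    · by_cases h4 : k = n - 1
      · exact ⟨n - 1, by omega, by unfold lab; split_ifs <;> omega⟩
      · exact ⟨k - 1, by omega, by unfold lab; split_ifs <;> omega⟩
  · exact ⟨k - 1, by omega, by unfold lab; split_ifs <;> omega⟩

lemma mod_pred {n a : ℕ} (hn : 1 ≤ n) (ha : a < n) :
    (a + n - 1) % n = if a = 0 then n - 1 else a - 1 := by
  split_ifs with h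
  · subst h; simp [Nat.mod_eq_of_lt (show n - 1 < n by omega)]
  · have : a + n - 1 = (a - 1) + n := by omega
    rw [this, Nat.add_mod_right, Nat.mod_eq_of_lt (by omega)]

set_option maxHeartbeats 2000000 in
lemma S_inj {n a b : ℕ} (hn : 3 ≤ n) (ha : a < n) (hb : b < n) (hab : a ≠ b) :
    lab n ((a + n - 1) % n) + lab n a ≠ lab n ((b + n - 1) % n) + lab n b := by
  rw [mod_pred (by omega) ha, mod_pred (by omega) hb]
  by_cases he : 2 ∣ n
  · simp only [lab, he, true_and]
    split_ifs <;> omega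
  · simp only [lab, he, false_and, if_false]
    split_ifs <;> omega
open SimpleGraph

lemma succ_mod {n x : ℕ} (h : x < n) : (x + 1) % n = if x + 1 = n then 0 else x + 1 := by
  split_ifs with h1
  · rw [h1, Nat.mod_self]
  · exact Nat.mod_eq_of_lt (by omega)

lemma val_succ {m : ℕ} (j : Fin (m+3)) : (j + 1).val = (j.val + 1) % (m+3) := by
  rw [Fin.add_def]; simp

lemma add_one_ne {m : ℕ} (j : Fin (m+3)) : j + 1 ≠ j := by
  intro h
  have h2 := congrArg Fin.val h
  rw [val_succ, succ_mod j.isLt] at h2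
  split_ifs at h2 <;> omega

lemma add_two_ne {m : ℕ} (j : Fin (m+3)) : j + 1 + 1 ≠ j := by
  intro h
  have h2 := congrArg Fin.val h
  rw [val_succ, val_succ, succ_mod j.isLt] at h2
  have hj := j.isLt
  split_ifs at h2 with h3
  · rw [Nat.mod_eq_of_lt (by omega)] at h2
    omega
  · rw [succ_mod (show j.val + 1 < m + 3 by omega)] at h2
    split_ifs at h2 <;> omega

lemma g_inj {m : ℕ} {i j : Fin (m+3)} (h : s(i, i+1) = s(j, j+1)) : i = j := by
  rw [Sym2.eq_iff] at h
  rcases h with ⟨h1, _⟩ | ⟨h1, h2⟩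
  · exact h1
  · exfalso; rw [h1] at h2; exact add_two_ne j h2

lemma adj_iff {m : ℕ} {u v : Fin (m+3)} :
    (cycleGraph (m+3)).Adj u v ↔ v = u + 1 ∨ u = v + 1 := by
  rw [cycleGraph_adj]
  constructor
  · rintro (h | h)
    · right; rw [sub_eq_iff_eq_add] at h; exact h.trans (add_comm 1 v)
    · left; rw [sub_eq_iff_eq_add] at h; exact h.trans (add_comm 1 u)
  · rintro (rfl | rfl) <;> simp

lemma mem_edge {m : ℕ} (e : Sym2 (Fin (m+3))) :
    e ∈ (cycleGraph (m+3)).edgeFinset ↔ ∃ i, s(i, i+1) = e := by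
  rw [mem_edgeFinset]
  induction e with
  | _ a b =>
    rw [mem_edgeSet, adj_iff]
    constructor
    · rintro (rfl | rfl)
      · exact ⟨a, rfl⟩
      · exact ⟨b, Sym2.eq_swap⟩
    · rintro ⟨i, hi⟩
      rw [Sym2.eq_iff] at hi
      rcases hi with ⟨rfl, rfl⟩ | ⟨rfl, rfl⟩
      · left; rfl
      · right; rfl

lemma incidence {m : ℕ} (v : Fin (m+3)) :
    (cycleGraph (m+3)).incidenceFinset v = {s(v - 1, v), s(v, v + 1)} := by
  ext e
  induction e with
  | _ a b =>
  rw [mem_incidenceFinset, Finset.mem_insert, Finset.mem_singleton,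
    SimpleGraph.mk'_mem_incidenceSet_iff]
  constructor
  · rintro ⟨he, hv⟩
    rw [adj_iff] at he
    rcases he with rfl | rfl
    · rcases hv with rfl | rfl
      · right; rfl
      · left
        rw [Sym2.eq_iff]
        exact Or.inl ⟨by rw [add_sub_cancel_right], rfl⟩
    · rcases hv with rfl | rfl
      · left
        rw [Sym2.eq_iff]
        exact Or.inr ⟨rfl, by rw [add_sub_cancel_right]⟩
      · right; exact Sym2.eq_swap
  · rintro (h | h) <;> rw [Sym2.eq_iff] at h <;>
      rcases h with ⟨rfl, rfl⟩ | ⟨rfl, rfl⟩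
    · exact ⟨by rw [adj_iff]; left; rw [sub_add_cancel], Or.inr rfl⟩
    · exact ⟨by rw [adj_iff]; right; rw [sub_add_cancel], Or.inl rfl⟩
    · exact ⟨by rw [adj_iff]; left; rfl, Or.inl rfl⟩
    · exact ⟨by rw [adj_iff]; right; rfl, Or.inr rfl⟩

def f (m : ℕ) (e : Sym2 (Fin (m+3))) : ℕ :=
  ∑ j : Fin (m+3), if s(j, j+1) = e then lab (m+3) j.val else 0

lemma f_g {m : ℕ} (i : Fin (m+3)) : f m s(i, i+1) = lab (m+3) i.val := by
  rw [f, Finset.sum_eq_single_of_mem i (Finset.mem_univ i)]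
  · rw [if_pos rfl]
  · intro j _ hj
    exact if_neg (fun hc => hj (g_inj hc))

lemma edge_eq {m : ℕ} : (cycleGraph (m+3)).edgeFinset
    = Finset.image (fun i : Fin (m+3) => s(i, i+1)) Finset.univ := by
  ext e; rw [mem_edge, Finset.mem_image]; simp

lemma edge_card {m : ℕ} : (cycleGraph (m+3)).edgeFinset.card = m + 3 := by
  rw [edge_eq, Finset.card_image_of_injective _ (fun i j h => g_inj h),
    Finset.card_univ, Fintype.card_fin]

lemma pair_ne {m : ℕ} (v : Fin (m+3)) : s(v - 1, v) ≠ s(v, v + 1) := by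
  intro h
  rw [Sym2.eq_iff] at h
  rcases h with ⟨h1, h2⟩ | ⟨h1, h2⟩
  · exact add_one_ne v h2.symm
  · have : v = v + 1 + 1 := by
      conv_lhs => rw [← sub_add_cancel v 1, h1]
    exact add_two_ne v this.symm

lemma vs {m : ℕ} (v : Fin (m+3)) :
    vertexSum (cycleGraph (m+3)) (f m) v
      = lab (m+3) ((v.val + (m+3) - 1) % (m+3)) + lab (m+3) v.val := by
  rw [vertexSum, incidence, Finset.sum_pair (pair_ne v)]
  have h1 : s(v - 1, v) = s(v - 1, (v - 1) + 1) := by rw [sub_add_cancel]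
  rw [h1, f_g, f_g]
  congr 2
  rw [Fin.sub_def]
  simp only [Fin.val_one]
  congr 1
  omega

end AM5

open AM5 in
theorem stmt_5 (n : ℕ) (hn : 3 ≤ n) : IsAntimagic (SimpleGraph.cycleGraph n) := by
  obtain ⟨m, rfl⟩ : ∃ m, n = m + 3 := ⟨n - 3, by omega⟩
  refine ⟨f m, ?_, ?_⟩
  · rw [edge_card]
    refine ⟨?_, ?_, ?_⟩
    · intro e he
      rw [Finset.mem_coe, mem_edge] at he
      obtain ⟨i, rfl⟩ := he
      rw [f_g]
      rw [Finset.coe_Icc, Set.mem_Icc]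
      exact lab_mem (by omega) i.isLt
    · intro e he e' he' hee
      rw [Finset.mem_coe, mem_edge] at he he'
      obtain ⟨i, rfl⟩ := he
      obtain ⟨j, rfl⟩ := he'
      rw [f_g, f_g] at hee
      rw [show i = j from Fin.ext (lab_inj (by omega) i.isLt j.isLt hee)]
    · intro k hk
      rw [Finset.coe_Icc, Set.mem_Icc] at hk
      obtain ⟨i, hi, hik⟩ := lab_surj (show 3 ≤ m+3 by omega) hk.1 hk.2
      refine ⟨s(⟨i, hi⟩, ⟨i, hi⟩ + 1), ?_, ?_⟩
      · rw [Finset.mem_coe, mem_edge]; exact ⟨_, rfl⟩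
      · rw [f_g]; exact hik
  · intro u v huv h
    rw [vs, vs] at h
    exact S_inj (by omega) u.isLt v.isLt (fun hc => huv (Fin.ext hc)) h
end

section
/- Every simple 2-regular graph (i.e., every disjoint union of cycles) is antimagic. -/
/-!
A 2-regular graph is a disjoint union of cycles, and the cycles can be labeled one after the
other. Give the edges of a cycle of length `L` the labels `s + 1, …, s + L` in cyclic order: the
vertex sums are then `2s + 3, 2s + 5, …, 2s + 2L - 1` and `2s + L + 1`; if `L` is even this last
sum collides with an odd one, which is repaired by swapping the last two labels. All vertex sums
of the cycle lie in `[2s + 3, 2s + 2L - 1]`, while the next cycle, labeled from `s + L + 1` on,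
has its sums in `[2(s + L) + 3, …]`, so sums on different cycles never meet.
-/

open Finset

def cycleLabel (L k : ℕ) : ℕ :=
  if L % 2 = 1 then k + 1
  else if k = L - 2 then L else if k = L - 1 then L - 1 else k + 1

def cyclePred (L k : ℕ) : ℕ := if k = 0 then L - 1 else k - 1

def cycleSum (L k : ℕ) : ℕ := cycleLabel L (cyclePred L k) + cycleLabel L k

lemma cyclePred_lt {L k : ℕ} (hk : k < L) : cyclePred L k < L := by
  unfold cyclePred; split_ifs <;> omega

lemma cyclePred_ne {L k : ℕ} (hL : 2 ≤ L) : cyclePred L k ≠ k := by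
  unfold cyclePred; split_ifs <;> omega

lemma cycleLabel_mem_Icc {L k : ℕ} (hk : k < L) : cycleLabel L k ∈ Icc 1 L := by
  rw [mem_Icc]; unfold cycleLabel; split_ifs <;> omega

lemma cycleLabel_injOn (L : ℕ) : Set.InjOn (cycleLabel L) (Set.Iio L) := by
  intro k hk l hl h
  simp only [Set.mem_Iio] at hk hl
  unfold cycleLabel at h; split_ifs at h <;> omega

lemma cycleSum_mem_Icc {L k : ℕ} (hL : 3 ≤ L) (hk : k < L) :
    cycleSum L k ∈ Icc 3 (2 * L - 1) := by
  rw [mem_Icc]; unfold cycleSum cyclePred cycleLabel; split_ifs <;> omega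

lemma cycleSum_injOn {L : ℕ} (hL : 3 ≤ L) : Set.InjOn (cycleSum L) (Set.Iio L) := by
  intro k hk l hl h
  simp only [Set.mem_Iio] at hk hl
  unfold cycleSum cyclePred cycleLabel at h; split_ifs at h <;> omega

lemma Set.InjOn.union_of_mapsTo_Icc {α : Type*} {A B : Set α} {φ : α → ℕ} {a b c d : ℕ}
    (hA : Set.InjOn φ A) (hB : Set.InjOn φ B) (hAab : Set.MapsTo φ A (Set.Icc a b))
    (hBcd : Set.MapsTo φ B (Set.Icc c d)) (hbc : b < c) : Set.InjOn φ (A ∪ B) := by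
  refine (Set.injOn_union (Set.disjoint_left.2 fun x hxA hxB =>
    (hAab hxA).2.not_gt (hbc.trans_le (hBcd hxB).1))).2 ⟨hA, hB, fun x hx y hy h => ?_⟩
  have := (hAab hx).2
  have := (hBcd hy).1
  omega

namespace SimpleGraph

section Regular
variable {V : Type*} [Fintype V] {G : SimpleGraph V} [DecidableRel G.Adj]

lemma IsRegularOfDegree.two_mul_card_edgeFinset {d : ℕ} (hreg : G.IsRegularOfDegree d) :
    2 * #G.edgeFinset = d * Fintype.card V := by
  rw [← sum_degrees_eq_twice_card_edges, sum_congr rfl fun v _ => hreg.degree_eq v, sum_const,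
    card_univ, smul_eq_mul, mul_comm]

lemma IsRegularOfDegree.isCycles (hreg : G.IsRegularOfDegree 2) : G.IsCycles := fun v _ => by
  rw [Set.ncard_eq_toFinset_card', ← neighborFinset_def, card_neighborFinset_eq_degree,
    hreg.degree_eq]

lemma IsRegularOfDegree.exists_isCycle (hreg : G.IsRegularOfDegree 2) (v : V) :
    ∃ p : G.Walk v v, p.IsCycle :=
  have hv : (G.neighborSet v).Nonempty :=
    (G.degree_pos_iff_nonempty (v := v)).1 (by rw [hreg.degree_eq]; norm_num)
  (hreg.isCycles.exists_cycle_toSubgraph_verts_eq_connectedComponentSupp rfl hv).imp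
    fun _ h => h.1

end Regular

namespace Walk
variable {V : Type*} {G : SimpleGraph V} {v : V} {p : G.Walk v v}

lemma getVert_cyclePred_succ {k : ℕ} (hk : k < p.length) :
    p.getVert (cyclePred p.length k + 1) = p.getVert k := by
  unfold cyclePred
  split_ifs with h
  · rw [Nat.sub_add_cancel (by omega), getVert_length, h, getVert_zero]
  · rw [Nat.sub_add_cancel (by omega)]

variable [DecidableEq V]

lemma IsCycle.idxOf_edges (hp : p.IsCycle) {k : ℕ} (hk : k < p.length) :
    p.edges.idxOf s(p.getVert k, p.getVert (k + 1)) = k := by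
  rw [← getElem_edges (by simpa using hk)]
  exact hp.edges_nodup.idxOf_getElem _ _

lemma IsCycle.injOn_step (hp : p.IsCycle) :
    Set.InjOn (fun i => s(p.getVert i, p.getVert (i + 1))) (Set.Iio p.length) := by
  intro i hi j hj h
  have hidx := congrArg p.edges.idxOf h
  rwa [hp.idxOf_edges hi, hp.idxOf_edges hj] at hidx

lemma IsCycle.getVert_mem_image_range (hp : p.IsCycle) {i : ℕ} (hi : i ≤ p.length) :
    p.getVert i ∈ (range p.length).image p.getVert := by
  rcases hi.lt_or_eq with hi | rfl
  · exact mem_image_of_mem _ (mem_range.2 hi)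
  · rw [getVert_length]
    exact mem_image.2 ⟨0, mem_range.2 (by have := hp.three_le_length; omega), p.getVert_zero⟩

lemma IsCycle.card_image_range (hp : p.IsCycle) :
    #((range p.length).image p.getVert) = p.length := by
  rw [card_image_of_injOn, card_range]
  exact hp.getVert_injOn'.mono fun i hi => by simp at hi ⊢; omega

variable [Fintype V] [DecidableRel G.Adj]

lemma IsCycle.incidenceFinset_getVert (hreg : G.IsRegularOfDegree 2) (hp : p.IsCycle) {k : ℕ}
    (hk : k < p.length) :
    G.incidenceFinset (p.getVert k) =
      {s(p.getVert (cyclePred p.length k), p.getVert (cyclePred p.length k + 1)),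
        s(p.getVert k, p.getVert (k + 1))} := by
  have hpred := cyclePred_lt hk
  symm
  apply eq_of_subset_of_card_le
  · intro e he
    rw [mem_insert, mem_singleton] at he
    rw [mem_incidenceFinset]
    rcases he with rfl | rfl
    · refine ⟨p.adj_getVert_succ hpred, ?_⟩
      rw [getVert_cyclePred_succ hk]
      exact Sym2.mem_mk_right _ _
    · exact ⟨p.adj_getVert_succ hk, Sym2.mem_mk_left _ _⟩
  · rw [card_incidenceFinset_eq_degree, hreg.degree_eq, card_pair]
    exact fun h => cyclePred_ne (by have := hp.three_le_length; omega) (hp.injOn_step hpred hk h)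

end Walk

def AdjClosed {V : Type*} (G : SimpleGraph V) (S : Finset V) : Prop :=
  ∀ a ∈ S, ∀ b, G.Adj a b → b ∈ S

lemma AdjClosed.sdiff {V : Type*} [DecidableEq V] {G : SimpleGraph V} {S C : Finset V}
    (hS : G.AdjClosed S) (hC : G.AdjClosed C) : G.AdjClosed (S \ C) := by
  intro a ha b hab
  rw [mem_sdiff] at ha ⊢
  exact ⟨hS a ha.1 b hab, fun hb => ha.2 (hC b hb a hab.symm)⟩

lemma AdjClosed.getVert_mem {V : Type*} {G : SimpleGraph V} {S : Finset V} (hS : G.AdjClosed S)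
    {u w : V} (p : G.Walk u w) (hu : u ∈ S) (k : ℕ) : p.getVert k ∈ S := by
  induction p generalizing k with
  | nil => exact hu
  | cons h q ih =>
    cases k with
    | zero => exact hu
    | succ k => exact ih (hS _ hu _ h) k

def ShiftedAntimagicOn {V : Type*} [Fintype V] [DecidableEq V] (G : SimpleGraph V)
    [DecidableRel G.Adj] (S : Finset V) (s : ℕ) : Prop :=
  ∃ f : Sym2 V → ℕ, Set.InjOn f ↑(G.edgeFinset ∩ S.sym2) ∧
    Set.MapsTo f ↑(G.edgeFinset ∩ S.sym2) (Set.Icc (s + 1) (s + #S)) ∧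
    Set.InjOn (vertexSum G f) ↑S ∧
    Set.MapsTo (vertexSum G f) ↑S (Set.Icc (2 * s + 3) (2 * s + 2 * #S - 1))

variable {V : Type*} [Fintype V] [DecidableEq V] {G : SimpleGraph V} [DecidableRel G.Adj]

lemma shiftedAntimagicOn_empty (s : ℕ) : G.ShiftedAntimagicOn ∅ s :=
  ⟨fun _ => 0, by simp, by simp, by simp, by simp [Set.mapsTo_empty]⟩

namespace AdjClosed
variable {S C : Finset V}

lemma incidenceFinset_subset (hS : G.AdjClosed S) {v : V} (hv : v ∈ S) :
    G.incidenceFinset v ⊆ S.sym2 := by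
  intro e he
  rw [mem_incidenceFinset] at he
  obtain ⟨hadj, hve⟩ := he
  induction e using Sym2.ind with | _ a b => ?_
  rw [mem_sym2_iff]
  intro x hx
  rw [Sym2.mem_iff] at hx hve
  rw [mem_edgeSet] at hadj
  rcases hve with rfl | rfl <;> rcases hx with rfl | rfl
  exacts [hv, hS _ hv _ hadj, hS _ hv _ hadj.symm, hv]

lemma edgeFinset_inter_sym2 (hC : G.AdjClosed C) (hCS : C ⊆ S) :
    G.edgeFinset ∩ S.sym2 = (G.edgeFinset ∩ C.sym2) ∪ (G.edgeFinset ∩ (S \ C).sym2) := by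
  ext e
  induction e using Sym2.ind with | _ a b => ?_
  simp only [mem_union, mem_inter, mem_sym2_iff, Sym2.mem_iff, forall_eq_or_imp, forall_eq,
    mem_sdiff, mem_edgeFinset, mem_edgeSet]
  constructor
  · rintro ⟨hab, ha, hb⟩
    by_cases haC : a ∈ C
    · exact Or.inl ⟨hab, haC, hC a haC b hab⟩
    · exact Or.inr ⟨hab, ⟨ha, haC⟩, hb, fun hbC => haC (hC b hbC a hab.symm)⟩
  · rintro (⟨hab, ha, hb⟩ | ⟨hab, ha, hb⟩)
    exacts [⟨hab, hCS ha, hCS hb⟩, ⟨hab, ha.1, hb.1⟩]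

end AdjClosed

namespace Walk
variable {v : V} {p : G.Walk v v}

lemma IsCycle.adjClosed (hreg : G.IsRegularOfDegree 2) (hp : p.IsCycle) :
    G.AdjClosed ((range p.length).image p.getVert) := by
  intro a ha b hab
  obtain ⟨k, hk, rfl⟩ := mem_image.1 ha
  have hb : s(p.getVert k, b) ∈ G.incidenceFinset (p.getVert k) :=
    (mem_incidenceFinset _ _ _).2 ⟨hab, Sym2.mem_mk_left _ _⟩
  rw [hp.incidenceFinset_getVert hreg (mem_range.1 hk), mem_insert, mem_singleton] at hb
  have hstep : ∀ i < p.length, s(p.getVert k, b) = s(p.getVert i, p.getVert (i + 1)) →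
      b ∈ (range p.length).image p.getVert := by
    intro i hi h
    rcases Sym2.mem_iff.1 (h ▸ Sym2.mem_mk_right _ _ : b ∈ s(p.getVert i, p.getVert (i + 1)))
      with rfl | rfl
    · exact hp.getVert_mem_image_range hi.le
    · exact hp.getVert_mem_image_range hi
  rcases hb with h | h
  exacts [hstep _ (cyclePred_lt (mem_range.1 hk)) h, hstep _ (mem_range.1 hk) h]

lemma IsCycle.exists_eq_step (hreg : G.IsRegularOfDegree 2) (hp : p.IsCycle) {e : Sym2 V}
    (he : e ∈ G.edgeFinset ∩ ((range p.length).image p.getVert).sym2) :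
    ∃ i < p.length, e = s(p.getVert i, p.getVert (i + 1)) := by
  rw [mem_inter, mem_edgeFinset, mem_sym2_iff] at he
  obtain ⟨k, hk, hka⟩ := mem_image.1 (he.2 _ e.out_fst_mem)
  have hinc : e ∈ G.incidenceFinset (p.getVert k) :=
    (mem_incidenceFinset _ _ _).2 ⟨he.1, hka ▸ e.out_fst_mem⟩
  rw [hp.incidenceFinset_getVert hreg (mem_range.1 hk), mem_insert, mem_singleton] at hinc
  rcases hinc with rfl | rfl
  exacts [⟨_, cyclePred_lt (mem_range.1 hk), rfl⟩, ⟨k, mem_range.1 hk, rfl⟩]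

theorem IsCycle.shiftedAntimagicOn (hreg : G.IsRegularOfDegree 2) (hp : p.IsCycle) (s : ℕ) :
    G.ShiftedAntimagicOn ((range p.length).image p.getVert) s := by
  have hL : 3 ≤ p.length := hp.three_le_length
  let f : Sym2 V → ℕ := fun e => s + cycleLabel p.length (p.edges.idxOf e)
  have hf : ∀ i < p.length, f s(p.getVert i, p.getVert (i + 1)) = s + cycleLabel p.length i :=
    fun i hi => by simp only [f, hp.idxOf_edges hi]
  have hsum : ∀ k < p.length, vertexSum G f (p.getVert k) = 2 * s + cycleSum p.length k := by
    intro k hk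
    have hne : s(p.getVert (cyclePred p.length k), p.getVert (cyclePred p.length k + 1)) ≠
        s(p.getVert k, p.getVert (k + 1)) :=
      fun h => cyclePred_ne (by omega) (hp.injOn_step (cyclePred_lt hk) hk h)
    rw [vertexSum, hp.incidenceFinset_getVert hreg hk, sum_pair hne, hf _ (cyclePred_lt hk),
      hf k hk, cycleSum]
    ring
  refine ⟨f, ?_, ?_, ?_, ?_⟩
  · intro e he e' he' h
    obtain ⟨i, hi, rfl⟩ := hp.exists_eq_step hreg he
    obtain ⟨j, hj, rfl⟩ := hp.exists_eq_step hreg he'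
    rw [hf i hi, hf j hj, add_right_inj] at h
    rw [cycleLabel_injOn p.length hi hj h]
  · intro e he
    obtain ⟨i, hi, rfl⟩ := hp.exists_eq_step hreg he
    have := mem_Icc.1 (cycleLabel_mem_Icc hi)
    rw [Set.mem_Icc, hf i hi, hp.card_image_range]
    omega
  · intro u hu u' hu' h
    obtain ⟨k, hk, rfl⟩ := mem_image.1 hu
    obtain ⟨l, hl, rfl⟩ := mem_image.1 hu'
    rw [mem_range] at hk hl
    rw [hsum k hk, hsum l hl, add_right_inj] at h
    rw [cycleSum_injOn hL hk hl h]
  · intro u hu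
    obtain ⟨k, hk, rfl⟩ := mem_image.1 hu
    rw [mem_range] at hk
    have := mem_Icc.1 (cycleSum_mem_Icc hL hk)
    rw [Set.mem_Icc, hsum k hk, hp.card_image_range]
    omega

end Walk

theorem ShiftedAntimagicOn.of_sdiff {S C : Finset V} {s : ℕ} (hC : G.AdjClosed C) (hCS : C ⊆ S)
    (h₁ : G.ShiftedAntimagicOn C s) (h₂ : G.ShiftedAntimagicOn (S \ C) (s + #C)) :
    G.ShiftedAntimagicOn S s := by
  obtain ⟨f₁, hf₁, hf₁S, hσ₁, hσ₁S⟩ := h₁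
  obtain ⟨f₂, hf₂, hf₂S, hσ₂, hσ₂S⟩ := h₂
  have hcard : #S = #C + #(S \ C) := by rw [add_comm, card_sdiff_add_card_eq_card hCS]
  have hSCR : (S : Set V) = ↑C ∪ ↑(S \ C) := by rw [← coe_union, union_sdiff_of_subset hCS]
  have hdisj : ∀ e ∈ (S \ C).sym2, e ∉ C.sym2 := fun e he heC =>
    (mem_sdiff.1 (mem_sym2_iff.1 he _ e.out_fst_mem)).2 (mem_sym2_iff.1 heC _ e.out_fst_mem)
  let f : Sym2 V → ℕ := fun e => if e ∈ C.sym2 then f₁ e else f₂ e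
  have hfC : Set.EqOn f₁ f ↑(G.edgeFinset ∩ C.sym2) := fun e he =>
    (if_pos (mem_inter.1 he).2).symm
  have hfR : Set.EqOn f₂ f ↑(G.edgeFinset ∩ (S \ C).sym2) := fun e he =>
    (if_neg (hdisj e (mem_inter.1 he).2)).symm
  have hσC : Set.EqOn (vertexSum G f₁) (vertexSum G f) ↑C := fun v hv =>
    sum_congr rfl fun e he => (if_pos (hC.incidenceFinset_subset hv he)).symm
  have hσR : Set.EqOn (vertexSum G f₂) (vertexSum G f) ↑(S \ C) := fun v hv =>
    sum_congr rfl fun e he => (if_neg fun heC =>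
      (mem_sdiff.1 hv).2 (mem_sym2_iff.1 heC v ((mem_incidenceFinset _ _ _).1 he).2)).symm
  have hedges : (↑(G.edgeFinset ∩ S.sym2) : Set (Sym2 V)) =
      ↑(G.edgeFinset ∩ C.sym2) ∪ ↑(G.edgeFinset ∩ (S \ C).sym2) := by
    rw [← coe_union, hC.edgeFinset_inter_sym2 hCS]
  refine ⟨f, ?_, ?_, ?_, ?_⟩
  · rw [hedges]
    exact (hf₁.congr hfC).union_of_mapsTo_Icc (hf₂.congr hfR)
      (hf₁S.congr hfC) (hf₂S.congr hfR) (by omega)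
  · rw [hedges, Set.mapsTo_union]
    exact ⟨(hf₁S.congr hfC).mono_right (Set.Icc_subset_Icc (by omega) (by omega)),
      (hf₂S.congr hfR).mono_right (Set.Icc_subset_Icc (by omega) (by omega))⟩
  · rw [hSCR]
    exact (hσ₁.congr hσC).union_of_mapsTo_Icc (hσ₂.congr hσR)
      (hσ₁S.congr hσC) (hσ₂S.congr hσR) (by omega)
  · rw [hSCR, Set.mapsTo_union]
    exact ⟨(hσ₁S.congr hσC).mono_right (Set.Icc_subset_Icc (by omega) (by omega)),
      (hσ₂S.congr hσR).mono_right (Set.Icc_subset_Icc (by omega) (by omega))⟩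

theorem IsRegularOfDegree.shiftedAntimagicOn (hreg : G.IsRegularOfDegree 2) {S : Finset V}
    (hS : G.AdjClosed S) (s : ℕ) : G.ShiftedAntimagicOn S s := by
  induction S using Finset.strongInduction generalizing s with
  | H S ih =>
  obtain rfl | ⟨v, hv⟩ := S.eq_empty_or_nonempty
  · exact shiftedAntimagicOn_empty s
  obtain ⟨p, hp⟩ := hreg.exists_isCycle v
  have hCS : (range p.length).image p.getVert ⊆ S :=
    image_subset_iff.2 fun k _ => hS.getVert_mem p hv k
  have hvC : v ∈ (range p.length).image p.getVert := by
    simpa using hp.getVert_mem_image_range p.length.zero_le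
  exact (hp.shiftedAntimagicOn hreg s).of_sdiff (hp.adjClosed hreg) hCS
    (ih _ (sdiff_ssubset hCS ⟨v, hvC⟩) (hS.sdiff (hp.adjClosed hreg)) _)

end SimpleGraph

theorem stmt_7 {V : Type*} [Fintype V] [DecidableEq V] (G : SimpleGraph V)
    [DecidableRel G.Adj] (hreg : G.IsRegularOfDegree 2) : IsAntimagic G := by
  obtain ⟨f, hf, hfmaps, hσ, -⟩ := hreg.shiftedAntimagicOn (fun _ _ _ _ => mem_univ _) 0
  have hcard : #G.edgeFinset = #(univ : Finset V) := by
    have := hreg.two_mul_card_edgeFinset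
    rw [card_univ]
    omega
  rw [sym2_univ, inter_univ] at hf hfmaps
  rw [zero_add, zero_add, ← hcard, ← coe_Icc] at hfmaps
  exact ⟨f, ⟨hfmaps, hf, surjOn_of_injOn_of_card_le f hfmaps hf (by simp)⟩,
    fun u v huv => hσ.ne (mem_univ u) (mem_univ v) huv⟩
end

section
/- Let G be a 3-regular bipartite graph with parts A and B, where B = {b_1, ..., b_n}. Then G has a labeling (bijection from E(G) to {1,...,3n}) such that for each i the vertex-sum at b_i equals 3n + 3i, and for each i exactly one vertex of A has vertex-sum 3n + 3i. -/
/-!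
By Hall's theorem, applied repeatedly, a 3-regular bipartite graph is the union of three perfect
matchings `M₀, M₁, M₂`, each a bijection from `B` to `A`. Let `π = M₀⁻¹ ∘ M₂` and label the edge
of `Mᵣ` at `bᵢ` by `3 σᵣ(i) + r + 1`, where `σ₀ = id`, `σ₁ = π` and `σ₂ = rev ∘ π`; these labels
are exactly `1, …, 3n`. At `bᵢ` the labels of `M₁` and `M₂` add up to `3n + 2`, so the vertex-sum
is `3n + 3(i + 1)`. At `a ∈ A` the `M₂`-label is the reverse of the `M₀`-label, so these two add up
to `3n + 1` and the vertex-sum is `3n + 3(π(M₁⁻¹ a) + 1)`; and `a ↦ π(M₁⁻¹ a)` is a bijection.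
-/

open Finset

theorem Finset.exists_equiv_forall_mem_of_regular {ι α : Type*} [Fintype ι] [Fintype α]
    [DecidableEq α] (t : ι → Finset α) {k : ℕ} (hk : 0 < k)
    (ht : ∀ i, #(t i) = k) (hdeg : ∀ a, #{i | a ∈ t i} = k) :
    ∃ f : ι ≃ α, ∀ i, f i ∈ t i := by
  have hall : ∀ s : Finset ι, #s ≤ #(s.biUnion t) := fun s ↦ by
    refine Nat.le_of_mul_le_mul_right (card_mul_le_card_mul (fun i a ↦ a ∈ t i) ?_ ?_) hk
    · intro i hi
      rw [← ht i]
      exact card_le_card fun a ha ↦ (mem_bipartiteAbove _).2 ⟨mem_biUnion.2 ⟨i, hi, ha⟩, ha⟩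
    · intro a _
      rw [← hdeg a]
      exact card_le_card fun i hi ↦ by simpa using (mem_bipartiteBelow _).1 hi |>.2
  obtain ⟨f, hf, hft⟩ := (all_card_le_biUnion_card_iff_exists_injective t).1 hall
  have hcard : Fintype.card ι = Fintype.card α := by
    refine Nat.eq_of_mul_eq_mul_right hk (card_mul_eq_card_mul (fun i a ↦ a ∈ t i) ?_ ?_)
    · intro i _; simpa [bipartiteAbove] using ht i
    · intro a _; simpa [bipartiteBelow] using hdeg a
  exact ⟨Equiv.ofBijective f ((Fintype.bijective_iff_injective_and_card f).2 ⟨hf, hcard⟩), hft⟩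

theorem Finset.exists_equivs_of_regular {ι α : Type*} [Fintype ι] [Fintype α]
    [DecidableEq α] (k : ℕ) (t : ι → Finset α)
    (ht : ∀ i, #(t i) = k) (hdeg : ∀ a, #{i | a ∈ t i} = k) :
    ∃ M : Fin k → ι ≃ α, ∀ i, univ.image (fun r ↦ M r i) = t i := by
  classical
  induction k generalizing t with
  | zero => exact ⟨Fin.elim0, fun i ↦ by simpa using (card_eq_zero.1 (ht i)).symm⟩
  | succ k ih =>
    obtain ⟨f, hf⟩ := exists_equiv_forall_mem_of_regular t k.succ_pos ht hdeg
    have hdeg' : ∀ a, #{i | a ∈ (t i).erase (f i)} = k := fun a ↦ by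
      have : ({i | a ∈ (t i).erase (f i)} : Finset ι) =
          ({i | a ∈ t i} : Finset ι).erase (f.symm a) := by
        ext i; simp [Equiv.eq_symm_apply, eq_comm]
      rw [this, card_erase_of_mem (by simpa using hf (f.symm a)), hdeg]; rfl
    obtain ⟨M, hM⟩ := ih (fun i ↦ (t i).erase (f i))
      (fun i ↦ by simp [card_erase_of_mem (hf i), ht]) hdeg'
    refine ⟨Fin.cons f M, fun i ↦ ?_⟩
    rw [← insert_erase (hf i), ← hM i]
    ext a
    simp [Fin.exists_fin_succ, eq_comm]

theorem Function.Injective.bijOn_extend {P β γ : Type*} {g : P → β} (hg : g.Injective)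
    {l : P → γ} (e : β → γ) {S : Set γ} (hl : Set.BijOn l Set.univ S) :
    Set.BijOn (Function.extend g l e) (Set.range g) S := by
  refine ⟨?_, ?_, ?_⟩
  · rintro _ ⟨p, rfl⟩; rw [hg.extend_apply]; exact hl.mapsTo (Set.mem_univ p)
  · rintro _ ⟨p, rfl⟩ _ ⟨q, rfl⟩ h
    rw [hg.extend_apply, hg.extend_apply] at h
    rw [hl.injOn (Set.mem_univ p) (Set.mem_univ q) h]
  · intro y hy
    obtain ⟨p, -, rfl⟩ := hl.surjOn hy
    exact ⟨g p, ⟨p, rfl⟩, hg.extend_apply l e p⟩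

def interleavedLabel {n k : ℕ} (σ : Fin k → Equiv.Perm (Fin n)) (p : Fin n × Fin k) : ℕ :=
  k * σ p.2 p.1 + p.2 + 1

theorem bijOn_interleavedLabel {n k : ℕ} (σ : Fin k → Equiv.Perm (Fin n)) :
    Set.BijOn (interleavedLabel σ) Set.univ (Set.Icc 1 (n * k)) := by
  have h : ∀ p, interleavedLabel σ p = finProdFinEquiv (σ p.2 p.1, p.2) + 1 := fun p ↦ by
    simp only [interleavedLabel, finProdFinEquiv, Equiv.coe_fn_mk, Nat.add_right_cancel_iff]
    ring
  refine ⟨fun p _ ↦ ?_, fun p _ q _ hpq ↦ ?_, fun y hy ↦ ?_⟩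
  · have := (finProdFinEquiv (σ p.2 p.1, p.2)).isLt
    simp only [h, Set.mem_Icc]; omega
  · simp only [h, add_left_inj, Fin.val_inj, EmbeddingLike.apply_eq_iff_eq, Prod.mk.injEq] at hpq
    obtain ⟨h1, h2⟩ := hpq
    ext
    · rw [h2] at h1; exact congrArg Fin.val ((σ q.2).injective h1)
    · rw [h2]
  · obtain ⟨hy1, hy2⟩ := hy
    set x := finProdFinEquiv.symm (⟨y - 1, by omega⟩ : Fin (n * k))
    refine ⟨((σ x.2).symm x.1, x.2), Set.mem_univ _, ?_⟩
    have := Nat.mod_add_div (y - 1) k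
    simp only [h, x, finProdFinEquiv_symm_apply, Equiv.apply_symm_apply, finProdFinEquiv_apply_val,
      Fin.coe_modNat, Fin.coe_divNat]
    omega

namespace SimpleGraph

variable {V ι : Type*} {G : SimpleGraph V} {A : Finset V} {b : ι → V}

theorem mem_of_adj_of_notMem (hbip : ∀ u v, G.Adj u v → (u ∈ A ↔ v ∉ A)) {u v : V}
    (hu : u ∉ A) (h : G.Adj u v) : v ∈ A := by
  by_contra hv; exact hu ((hbip u v h).2 hv)

variable {k : ℕ}

def matchingEdge (b : ι → V) (M : Fin k → ι ≃ A) (p : ι × Fin k) : Sym2 V :=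
  s(b p.1, M p.2 p.1)

variable {M : Fin k → ι ≃ A}

theorem matchingEdge_injective (hb : b.Injective) (hbA : ∀ i, b i ∉ A)
    (hMinj : ∀ i, Function.Injective fun r ↦ M r i) : (matchingEdge b M).Injective := by
  rintro ⟨i, r⟩ ⟨j, s⟩ h
  rcases Sym2.eq_iff.1 h with ⟨hij, hrs⟩ | ⟨hij, -⟩
  · obtain rfl : i = j := hb hij
    exact congrArg (Prod.mk i) (hMinj i (Subtype.ext hrs))
  · exact absurd (hij ▸ (M s j).2) (hbA i)

theorem range_matchingEdge (hrange : ∀ v, v ∉ A ↔ v ∈ Set.range b)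
    (hbip : ∀ u v, G.Adj u v → (u ∈ A ↔ v ∉ A))
    (hM : ∀ i (a : A), G.Adj (b i) a ↔ ∃ r, M r i = a) :
    Set.range (matchingEdge b M) = G.edgeSet := by
  have hfromB : ∀ u v, G.Adj u v → u ∉ A → s(u, v) ∈ Set.range (matchingEdge b M) := by
    intro u v huv hu
    obtain ⟨i, rfl⟩ := (hrange u).1 hu
    obtain ⟨r, hr⟩ := (hM i ⟨v, mem_of_adj_of_notMem hbip hu huv⟩).1 huv
    exact ⟨(i, r), by rw [matchingEdge, hr]⟩
  ext e
  induction e with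
  | _ u v =>
    refine ⟨?_, fun huv ↦ ?_⟩
    · rintro ⟨⟨i, r⟩, h⟩
      rw [← h]
      exact (hM i (M r i)).2 ⟨r, rfl⟩
    · rw [mem_edgeSet] at huv
      by_cases hu : u ∈ A
      · rw [Sym2.eq_swap]; exact hfromB v u huv.symm ((hbip u v huv).1 hu)
      · exact hfromB u v huv hu

theorem mem_matchingEdge_left_iff (hb : b.Injective) (hbA : ∀ i, b i ∉ A) (i : ι)
    (p : ι × Fin k) : b i ∈ matchingEdge b M p ↔ p.1 = i := by
  rw [matchingEdge, Sym2.mem_iff, hb.eq_iff, eq_comm, or_iff_left]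
  exact fun h ↦ hbA i (h ▸ (M p.2 p.1).2)

theorem mem_matchingEdge_right_iff (hbA : ∀ i, b i ∉ A) (a : A) (p : ι × Fin k) :
    (a : V) ∈ matchingEdge b M p ↔ p.1 = (M p.2).symm a := by
  rw [matchingEdge, Sym2.mem_iff, or_iff_right, Equiv.eq_symm_apply, eq_comm, Subtype.ext_iff]
  exact fun h ↦ hbA p.1 (h ▸ a.2)

variable [Fintype V] [DecidableEq V] [DecidableRel G.Adj]

theorem card_filter_adj_eq_degree {X : Type*} [Fintype X] {e : X → V} (he : e.Injective)
    {v : V} (hv : ∀ w, G.Adj v w → w ∈ Set.range e) : #{x | G.Adj v (e x)} = G.degree v := by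
  rw [← card_neighborFinset_eq_degree, ← card_image_of_injective _ he]
  congr 1
  ext w
  simp only [mem_image, mem_filter, mem_univ, true_and, mem_neighborFinset]
  refine ⟨by rintro ⟨x, hx, rfl⟩; exact hx, fun h ↦ ?_⟩
  obtain ⟨x, rfl⟩ := hv w h
  exact ⟨x, h, rfl⟩

theorem exists_equivs_of_isRegularOfDegree [Fintype ι] (hreg : G.IsRegularOfDegree k)
    (hb : b.Injective) (hrange : ∀ v, v ∉ A ↔ v ∈ Set.range b)
    (hbip : ∀ u v, G.Adj u v → (u ∈ A ↔ v ∉ A)) :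
    ∃ M : Fin k → ι ≃ A, (∀ i, Function.Injective fun r ↦ M r i) ∧
      ∀ i (a : A), G.Adj (b i) a ↔ ∃ r, M r i = a := by
  have hbA : ∀ i, b i ∉ A := fun i ↦ (hrange _).2 ⟨i, rfl⟩
  set t : ι → Finset A := fun i ↦ {a | G.Adj (b i) a}
  have ht : ∀ i, #(t i) = k := fun i ↦ by
    rw [card_filter_adj_eq_degree Subtype.val_injective, hreg]
    exact fun w h ↦ ⟨⟨w, mem_of_adj_of_notMem hbip (hbA i) h⟩, rfl⟩
  have hdeg : ∀ a, #{i | a ∈ t i} = k := fun a ↦ by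
    simp_rw [t, mem_filter, mem_univ, true_and, G.adj_comm (b _)]
    rw [card_filter_adj_eq_degree hb, hreg]
    exact fun w h ↦ (hrange w).1 ((hbip _ _ h).1 a.2)
  obtain ⟨M, hM⟩ := exists_equivs_of_regular k t ht hdeg
  refine ⟨M, fun i ↦ ?_, fun i a ↦ ?_⟩
  · rw [← Set.injOn_univ, ← coe_univ, ← card_image_iff, hM, ht, card_univ, Fintype.card_fin]
  · have := congrArg (a ∈ ·) (hM i)
    simpa [t, eq_comm] using this.symm

theorem vertexSum_extend {P : Type*} {g : P → Sym2 V} (hg : g.Injective)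
    (hE : Set.range g = G.edgeSet) (l : P → ℕ) (v : V) (s : Finset P)
    (hs : ∀ p, v ∈ g p ↔ p ∈ s) : vertexSum G (Function.extend g l 0) v = ∑ p ∈ s, l p := by
  have : G.incidenceFinset v = s.image g := by
    ext e
    rw [incidenceFinset_eq_filter, mem_filter, mem_edgeFinset, ← hE]
    constructor
    · rintro ⟨⟨p, rfl⟩, hv⟩; exact mem_image_of_mem g ((hs p).1 hv)
    · rintro h; obtain ⟨p, hp, rfl⟩ := mem_image.1 h; exact ⟨⟨p, rfl⟩, (hs p).2 hp⟩
  rw [vertexSum, this, sum_image hg.injOn]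
  exact sum_congr rfl fun p _ ↦ hg.extend_apply l 0 p


theorem vertexSum_extend_matchingEdge_left (hb : b.Injective) (hbA : ∀ i, b i ∉ A)
    (hg : (matchingEdge b M).Injective) (hE : Set.range (matchingEdge b M) = G.edgeSet)
    (l : ι × Fin k → ℕ) (i : ι) :
    vertexSum G (Function.extend (matchingEdge b M) l 0) (b i) = ∑ r, l (i, r) := by
  rw [vertexSum_extend hg hE l (b i) ({i} ×ˢ univ), sum_product, sum_singleton]
  simp [mem_matchingEdge_left_iff hb hbA, eq_comm]

theorem vertexSum_extend_matchingEdge_right [DecidableEq ι] (hbA : ∀ i, b i ∉ A)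
    (hg : (matchingEdge b M).Injective) (hE : Set.range (matchingEdge b M) = G.edgeSet)
    (l : ι × Fin k → ℕ) (a : A) :
    vertexSum G (Function.extend (matchingEdge b M) l 0) a = ∑ r, l ((M r).symm a, r) := by
  rw [vertexSum_extend hg hE l a (univ.image fun r ↦ ((M r).symm a, r)),
    sum_image fun r _ s _ h ↦ (Prod.ext_iff.1 h).2]
  intro p
  simp only [mem_matchingEdge_right_iff hbA, mem_image, mem_univ, true_and]
  exact ⟨fun h ↦ ⟨p.2, Prod.ext h.symm rfl⟩, by rintro ⟨r, rfl⟩; rfl⟩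

end SimpleGraph

def threeLabel {n : ℕ} (π : Equiv.Perm (Fin n)) : Fin n × Fin 3 → ℕ :=
  interleavedLabel ![1, π, Fin.revPerm * π]

section threeLabel

variable {n : ℕ} (π : Equiv.Perm (Fin n)) (i : Fin n)

theorem threeLabel_zero : threeLabel π (i, 0) = 3 * i + 1 := by
  simp [threeLabel, interleavedLabel]

theorem threeLabel_one : threeLabel π (i, 1) = 3 * π i + 2 := by
  simp [threeLabel, interleavedLabel]

theorem threeLabel_two : threeLabel π (i, 2) = 3 * (n - π i) := by
  have := (π i).isLt
  simp only [threeLabel, interleavedLabel, Matrix.cons_val, Equiv.Perm.coe_mul,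
    Function.comp_apply, Fin.revPerm_apply, Fin.val_rev]
  omega

theorem sum_threeLabel : ∑ r, threeLabel π (i, r) = 3 * n + 3 * (i.val + 1) := by
  have := (π i).isLt
  rw [Fin.sum_univ_three, threeLabel_zero, threeLabel_one, threeLabel_two]
  omega

theorem threeLabel_add_add {j₀ j₂ : Fin n} (h : π j₂ = j₀) :
    threeLabel π (j₀, 0) + threeLabel π (i, 1) + threeLabel π (j₂, 2) =
      3 * n + 3 * ((π i).val + 1) := by
  have := j₀.isLt
  rw [threeLabel_zero, threeLabel_one, threeLabel_two, h]
  omega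

end threeLabel

open SimpleGraph in
theorem stmt_11 {V : Type*} [Fintype V] [DecidableEq V] (G : SimpleGraph V)
    [DecidableRel G.Adj] (n : ℕ) (A B : Finset V)
    (hdisj : Disjoint A B) (hcover : A ∪ B = Finset.univ)
    (hbip : ∀ u v, G.Adj u v → (u ∈ A ↔ v ∈ B))
    (hreg : G.IsRegularOfDegree 3)
    (hB : B.card = n) (b : Fin n → V) (hbmem : ∀ i, b i ∈ B)
    (hbinj : Function.Injective b) :
    ∃ f : Sym2 V → ℕ, Set.BijOn f ↑G.edgeFinset ↑(Finset.Icc 1 (3 * n)) ∧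
      (∀ i : Fin n, vertexSum G f (b i) = 3 * n + 3 * (i.val + 1)) ∧
      ∀ i : Fin n, ∃! a, a ∈ A ∧ vertexSum G f a = 3 * n + 3 * (i.val + 1) := by
  have hBA : ∀ v, v ∈ B ↔ v ∉ A := fun v ↦
    ⟨fun hv hA ↦ disjoint_left.1 hdisj hA hv,
      fun hv ↦ (mem_union.1 (hcover ▸ mem_univ v)).resolve_left hv⟩
  have hBb : univ.image b = B := eq_of_subset_of_card_le
    (fun v hv ↦ by obtain ⟨i, -, rfl⟩ := mem_image.1 hv; exact hbmem i)
    (by rw [card_image_of_injective _ hbinj, hB, card_univ, Fintype.card_fin])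
  have hrange : ∀ v, v ∉ A ↔ v ∈ Set.range b := fun v ↦ by rw [← hBA, ← hBb]; simp
  have hbipA : ∀ u v, G.Adj u v → (u ∈ A ↔ v ∉ A) := fun u v h ↦ by
    rw [← hBA]; exact hbip u v h
  have hbA : ∀ i, b i ∉ A := fun i ↦ (hrange _).2 ⟨i, rfl⟩
  obtain ⟨M, hMinj, hM⟩ := exists_equivs_of_isRegularOfDegree hreg hbinj hrange hbipA
  have hg := matchingEdge_injective hbinj hbA hMinj
  have hE := range_matchingEdge hrange hbipA hM
  set π := (M 2).trans (M 0).symm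
  set f := Function.extend (matchingEdge b M) (threeLabel π) 0
  have hsumA : ∀ a : A, vertexSum G f a = 3 * n + 3 * ((π ((M 1).symm a)).val + 1) := fun a ↦ by
    rw [vertexSum_extend_matchingEdge_right hbA hg hE, Fin.sum_univ_three]
    exact threeLabel_add_add π _ (by simp [π])
  refine ⟨f, ?_, fun i ↦ ?_, fun i ↦ ?_⟩
  · rw [coe_edgeFinset, ← hE, coe_Icc, mul_comm]
    exact hg.bijOn_extend 0 (bijOn_interleavedLabel _)
  · rw [vertexSum_extend_matchingEdge_left hbinj hbA hg hE]
    exact sum_threeLabel π i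
  · refine ⟨M 1 (π.symm i), ⟨(M 1 _).2, by rw [hsumA]; simp⟩, ?_⟩
    rintro v ⟨hv, hsum⟩
    rw [hsumA ⟨v, hv⟩] at hsum
    have : π ((M 1).symm ⟨v, hv⟩) = i := Fin.ext (by omega)
    simp [← this]
end

section
/- For the cycle C_n with edges labeled in cyclic order by the sequence 1, 3, 5, ..., (up to n or n−1), then descending through the even numbers ..., 4, 2 (with n and n−1 switched in the middle when n is even), all n vertex-sums are pairwise distinct: the sums of consecutive odd labels are multiples of 4, while the sums of consecutive even labels are congruent to 2 modulo 4. -/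
theorem stmt_18 (n : ℕ) (hn : 3 ≤ n)
    (a : ZMod n → ℕ)
    (ha : ∀ i : ZMod n, a i = if 2 * i.val < n then 2 * i.val + 1 else 2 * (n - i.val))
    (s : ZMod n → ℕ) (hs : ∀ i : ZMod n, s i = a (i - 1) + a i) :
    Function.Injective s ∧
      (∀ i : ZMod n, Odd (a (i - 1)) → Odd (a i) → s i % 4 = 0) ∧
      (∀ i : ZMod n, Even (a (i - 1)) → Even (a i) → s i % 4 = 2) := by
  haveI : NeZero n := ⟨by omega⟩
  have hval : ∀ i : ZMod n, (i - 1).val = if i.val = 0 then n - 1 else i.val - 1 := by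
    intro i
    have hc : ((n - 1 : ℕ) : ZMod n) = -1 := by
      rw [Nat.cast_sub (by omega : 1 ≤ n)]
      simp
    have h1 : (i - 1 : ZMod n) = i + ((n - 1 : ℕ) : ZMod n) := by
      rw [hc]; ring
    have h2 : ((n - 1 : ℕ) : ZMod n).val = n - 1 := ZMod.val_cast_of_lt (by omega)
    rw [h1, ZMod.val_add, h2]
    have hv : i.val < n := ZMod.val_lt i
    by_cases h0 : i.val = 0
    · rw [if_pos h0, h0, Nat.zero_add, Nat.mod_eq_of_lt (by omega)]
    · have he : i.val + (n - 1) = (i.val - 1) + n := by omega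
      rw [if_neg h0, he, Nat.add_mod_right, Nat.mod_eq_of_lt (by omega)]
  have hsf : ∀ i : ZMod n, s i =
      if i.val = 0 then 3
      else if 2 * i.val < n then 4 * i.val
      else if 2 * (i.val - 1) < n then 2 * n - 1
      else 4 * (n - i.val) + 2 := by
    intro i
    have hv : i.val < n := ZMod.val_lt i
    rw [hs, ha, ha, hval]
    by_cases h0 : i.val = 0
    · rw [if_pos h0, if_pos h0, h0, if_neg (by omega), if_pos (by omega)]
      omega
    · rw [if_neg h0, if_neg h0]
      by_cases h1 : 2 * i.val < n
      · rw [if_pos (by omega), if_pos h1, if_pos h1]; omega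
      · rw [if_neg h1, if_neg h1]
        by_cases h2 : 2 * (i.val - 1) < n
        · rw [if_pos h2, if_pos h2]; omega
        · rw [if_neg h2, if_neg h2]; omega
  refine ⟨?_, ?_, ?_⟩
  · intro i j hij
    rw [hsf i, hsf j] at hij
    have hvi : i.val < n := ZMod.val_lt i
    have hvj : j.val < n := ZMod.val_lt j
    have hv : i.val = j.val := by split_ifs at hij <;> omega
    exact ZMod.val_injective n hv
  · intro i h1 h2
    have hv : i.val < n := ZMod.val_lt i
    rw [ha, hval] at h1
    rw [ha] at h2
    rw [Nat.odd_iff] at h1 h2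
    rw [hsf]
    by_cases h0 : i.val = 0
    · rw [if_pos h0, if_neg (by omega)] at h1
      omega
    · rw [if_neg h0] at h1
      rw [if_neg h0]
      split_ifs at h1 h2 ⊢ <;> omega
  · intro i h1 h2
    have hv : i.val < n := ZMod.val_lt i
    rw [ha, hval] at h1
    rw [ha] at h2
    rw [Nat.even_iff] at h1 h2
    rw [hsf]
    by_cases h0 : i.val = 0
    · rw [h0, if_pos (by omega)] at h2
      omega
    · rw [if_neg h0] at h1
      rw [if_neg h0]
      split_ifs at h1 h2 ⊢ <;> omega
end
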